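/- Fix D ∈ ℕ and τ₀ ∈ ℝ. Let r : ℝ × ℝ^D → ℝ be C¹ with r(τ, ·) strictly positive, and let u : ℝ × ℝ^D → ℝ^D be C¹ with u(τ, x) = 0 for all τ and all x outside a fixed compact set K ⊆ ℝ^D. Assume the continuity equation ∂r/∂τ(τ,x) = −div_x( r(τ,·)·u(τ,·) )(x) for all (τ,x), that x ↦ r(τ,x)·log r(τ,x) is Lebesgue integrable for τ near τ₀ with its pointwise τ-derivative dominated uniformly near τ₀ by a fixed integrable function, and that x ↦ r(τ₀,x)·div_x u(τ₀,x) is integrable. Then τ ↦ ∫ r(τ,x)·log r(τ,x) dx is differentiable at τ₀ with derivative −∫ r(τ₀,x)·div_x u(τ₀,x) dx; equivalently, the differential entropy H(τ) := −∫ r(τ,·) log r(τ,·) satisfies H′(τ₀) = ∫ r(τ₀,x)·div_x u(τ₀,x) dx. -/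

import Mathlib

/-!
Differentiate under the integral sign, which the dominating function allows. At `τ₀` the chain
rule and the continuity equation give `∂τ (r log r) = -(log r + 1) div (r u)`, and the product
rule for the divergence turns this into `-div ((r log r) u) - r div u`. The first term is the
divergence of a compactly supported `C¹` field, so its integral vanishes: integrate by parts
against the constant function `1`.
-/

open MeasureTheory Real

/-- Divergence of a vector field on `ℝ^D`. -/
noncomputable def divg {D : ℕ}
    (F : EuclideanSpace ℝ (Fin D) → EuclideanSpace ℝ (Fin D))
    (x : EuclideanSpace ℝ (Fin D)) : ℝ :=
  ∑ i, fderiv ℝ F x (EuclideanSpace.single i 1) i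

theorem hasDerivAt_integral_of_eventually_abs_deriv_le {α : Type*} [MeasurableSpace α]
    {μ : Measure α} {F : ℝ → α → ℝ} {t₀ : ℝ} {bound : α → ℝ}
    (hF_int : ∀ᶠ t in nhds t₀, Integrable (F t) μ)
    (hF'_meas : AEStronglyMeasurable (fun a => deriv (F · a) t₀) μ)
    (h_diff : ∀ᶠ t in nhds t₀, ∀ a, DifferentiableAt ℝ (F · a) t)
    (h_bound : ∀ᶠ t in nhds t₀, ∀ a, |deriv (F · a) t| ≤ bound a)
    (bound_integrable : Integrable bound μ) :
    HasDerivAt (fun t => ∫ a, F t a ∂μ) (∫ a, deriv (F · a) t₀ ∂μ) t₀ := by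
  obtain ⟨ε, hε, hball⟩ := Metric.eventually_nhds_iff_ball.1 (h_diff.and h_bound)
  exact (hasDerivAt_integral_of_dominated_loc_of_deriv_le (Metric.ball_mem_nhds t₀ hε)
    (hF_int.mono fun _ h => h.aestronglyMeasurable) hF_int.self_of_nhds hF'_meas
    (ae_of_all _ fun a t ht => (hball t ht).2 a) bound_integrable
    (ae_of_all _ fun a t ht => ((hball t ht).1 a).hasDerivAt)).2

section CompactSupport

variable {E F : Type*} [NormedAddCommGroup E] [NormedSpace ℝ E] [MeasurableSpace E]
  [BorelSpace E] {μ : Measure E} [NormedAddCommGroup F] [NormedSpace ℝ F] {G : E → F}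

theorem HasCompactSupport.integrable_fderiv_apply [IsFiniteMeasureOnCompacts μ]
    (hG : ContDiff ℝ 1 G) (hs : HasCompactSupport G) (v : E) :
    Integrable (fun x => fderiv ℝ G x v) μ :=
  ((hG.continuous_fderiv one_ne_zero).clm_apply continuous_const).integrable_of_hasCompactSupport
    (hs.fderiv_apply ℝ v)

theorem HasCompactSupport.integral_fderiv_apply_eq_zero [FiniteDimensional ℝ E]
    [μ.IsAddHaarMeasure] (hG : ContDiff ℝ 1 G) (hs : HasCompactSupport G) (v : E) :
    ∫ x, fderiv ℝ G x v ∂μ = 0 := by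
  have h := integral_smul_fderiv_eq_neg_fderiv_smul_of_integrable (μ := μ)
    (f := fun _ => (1 : ℝ)) (g := G) (v := v) (by simp)
    (by simpa using hs.integrable_fderiv_apply hG v)
    (by simpa using hG.continuous.integrable_of_hasCompactSupport hs)
    (fun x _ => differentiableAt_const _) (fun x _ => hG.differentiable one_ne_zero x)
  simpa using h

end CompactSupport

section Divergence

variable {D : ℕ} {G w : EuclideanSpace ℝ (Fin D) → EuclideanSpace ℝ (Fin D)}

theorem continuous_divg (hG : ContDiff ℝ 1 G) : Continuous (divg G) :=
  continuous_finsetSum _ fun i _ => (EuclideanSpace.proj i).continuous.comp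
    ((hG.continuous_fderiv one_ne_zero).clm_apply continuous_const)

theorem HasCompactSupport.divg (hs : HasCompactSupport G) : HasCompactSupport (divg G) :=
  (hs.fderiv ℝ).comp_left
    (g := fun L : _ →L[ℝ] EuclideanSpace ℝ (Fin D) => ∑ i, L (EuclideanSpace.single i 1) i)
    (by simp)

theorem integral_divg_eq_zero (hG : ContDiff ℝ 1 G) (hs : HasCompactSupport G) :
    ∫ x, divg G x = 0 := by
  have hint (i : Fin D) := hs.integrable_fderiv_apply (μ := volume) hG (EuclideanSpace.single i 1)
  unfold divg
  rw [integral_finsetSum _ fun i _ =>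
    by exact (EuclideanSpace.proj (𝕜 := ℝ) i).integrable_comp (hint i)]
  refine Finset.sum_eq_zero fun i _ => ?_
  refine ((EuclideanSpace.proj i).integral_comp_comm (hint i)).trans ?_
  rw [hs.integral_fderiv_apply_eq_zero hG]
  rfl

theorem divg_smul {f : EuclideanSpace ℝ (Fin D) → ℝ} {x : EuclideanSpace ℝ (Fin D)}
    (hf : DifferentiableAt ℝ f x) (hw : DifferentiableAt ℝ w x) :
    divg (fun y => f y • w y) x = f x * divg w x + fderiv ℝ f x (w x) := by
  unfold divg
  rw [fderiv_fun_smul hf hw]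
  have hsum : ∑ i, fderiv ℝ f x (EuclideanSpace.single i 1) * w x i = fderiv ℝ f x (w x) := by
    conv_rhs => rw [← (EuclideanSpace.basisFun (Fin D) ℝ).sum_repr (w x)]
    simp [map_sum, mul_comm]
  simp only [add_apply, smul_apply, ContinuousLinearMap.smulRight_apply, PiLp.add_apply,
    PiLp.smul_apply, smul_eq_mul, Finset.sum_add_distrib, Finset.mul_sum, hsum]

theorem divg_mul_log_smul {f : EuclideanSpace ℝ (Fin D) → ℝ} {x : EuclideanSpace ℝ (Fin D)}
    (hf : DifferentiableAt ℝ f x) (hx : f x ≠ 0) (hw : DifferentiableAt ℝ w x) :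
    divg (fun y => (f y * log (f y)) • w y) x
      = (log (f x) + 1) * divg (fun y => f y • w y) x - f x * divg w x := by
  have hφ : HasFDerivAt (fun y => f y * log (f y)) ((log (f x) + 1) • fderiv ℝ f x) x :=
    (hasDerivAt_mul_log hx).comp_hasFDerivAt x hf.hasFDerivAt
  rw [divg_smul hφ.differentiableAt hw, divg_smul hf hw, hφ.fderiv, smul_apply, smul_eq_mul]
  ring

end Divergence

/-- entropy evolution along the continuity equation
`∂r/∂τ = −div(r u)`: `d/dτ ∫ r log r = −∫ r(τ₀,·) div u(τ₀,·)` at `τ = τ₀`. -/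
theorem stmt_6 {D : ℕ} (τ₀ : ℝ)
    (r : ℝ × EuclideanSpace ℝ (Fin D) → ℝ) (hr : ContDiff ℝ 1 r)
    (hrpos : ∀ τ x, 0 < r (τ, x))
    (u : ℝ × EuclideanSpace ℝ (Fin D) → EuclideanSpace ℝ (Fin D)) (hu : ContDiff ℝ 1 u)
    (K : Set (EuclideanSpace ℝ (Fin D))) (hK : IsCompact K)
    (husupp : ∀ τ x, x ∉ K → u (τ, x) = 0)
    (hcont : ∀ τ x, deriv (fun t => r (t, x)) τ = - divg (fun y => r (τ, y) • u (τ, y)) x)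
    (hint : ∀ᶠ τ in nhds τ₀, Integrable fun x => r (τ, x) * log (r (τ, x)))
    (bound : EuclideanSpace ℝ (Fin D) → ℝ) (hbound : Integrable bound)
    (hdom : ∀ᶠ τ in nhds τ₀, ∀ x,
      |deriv (fun t => r (t, x) * log (r (t, x))) τ| ≤ bound x)
    (hint0 : Integrable fun x => r (τ₀, x) * divg (fun y => u (τ₀, y)) x) :
    HasDerivAt (fun τ => ∫ x, r (τ, x) * log (r (τ, x)))
      (-∫ x, r (τ₀, x) * divg (fun y => u (τ₀, y)) x) τ₀ := by
  have hr₀ : ContDiff ℝ 1 fun x => r (τ₀, x) := hr.comp (contDiff_const.prodMk contDiff_id)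
  have hu₀ : ContDiff ℝ 1 fun x => u (τ₀, x) := hu.comp (contDiff_const.prodMk contDiff_id)
  have hslice : ∀ x, Differentiable ℝ fun t => r (t, x) := fun x =>
    (hr.comp (contDiff_id.prodMk contDiff_const)).differentiable one_ne_zero
  have hfield : ContDiff ℝ 1 fun y => (r (τ₀, y) * log (r (τ₀, y))) • u (τ₀, y) :=
    (hr₀.mul (hr₀.log fun y => (hrpos τ₀ y).ne')).smul hu₀
  have hsupp : HasCompactSupport fun y => (r (τ₀, y) * log (r (τ₀, y))) • u (τ₀, y) :=
    HasCompactSupport.intro hK fun y hy => by simp [husupp τ₀ y hy]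
  have hdiv_int : Integrable (divg fun y => (r (τ₀, y) * log (r (τ₀, y))) • u (τ₀, y)) :=
    (continuous_divg hfield).integrable_of_hasCompactSupport hsupp.divg
  have htime : (fun x => deriv (fun t => r (t, x) * log (r (t, x))) τ₀) = fun x =>
      -divg (fun y => (r (τ₀, y) * log (r (τ₀, y))) • u (τ₀, y)) x
        - r (τ₀, x) * divg (fun y => u (τ₀, y)) x := by
    funext x
    have hchain : HasDerivAt (fun t => r (t, x) * log (r (t, x)))
        ((log (r (τ₀, x)) + 1) * deriv (fun t => r (t, x)) τ₀) τ₀ :=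
      (hasDerivAt_mul_log (hrpos τ₀ x).ne').comp (h := fun t => r (t, x)) τ₀
        (hslice x τ₀).hasDerivAt
    rw [hchain.deriv, hcont,
      divg_mul_log_smul (hr₀.differentiable one_ne_zero x) (hrpos τ₀ x).ne'
        (hu₀.differentiable one_ne_zero x)]
    ring
  have hderiv := hasDerivAt_integral_of_eventually_abs_deriv_le hint
    (htime ▸ (hdiv_int.neg.sub hint0).aestronglyMeasurable)
    (.of_forall fun t x => ((hslice x t).mul ((hslice x t).log (hrpos t x).ne')))
    hdom hbound
  rwa [htime, integral_sub (f := fun x => -divg _ x) hdiv_int.neg hint0,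
    integral_neg, integral_divg_eq_zero hfield hsupp, neg_zero, zero_sub] at hderiv
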